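/- arXiv:1804.04394 — 9 statements merged into one kernel-verified Lean document; each statement's English description precedes it below -/
import Mathlib

section
/- Let D₈ be the root lattice realized inside ℤ⁸ (with bilinear form b equal to the negative of the standard Euclidean inner product) as the sublattice of vectors with even coordinate sum, with simple roots d_i = e_i − e_{i+1} for 1 ≤ i ≤ 7 and d₈ = e₇ + e₈. Then the orthogonal complement in D₈ of the sublattice generated by {d₈, d₆, d₇, d₅, d₄, d₁, d₂} (a copy of A₂ ⊕ D₅) is the rank‑one lattice ℤ·w with w = 2d₁ + 4d₂ + 6d₃ + 6d₄ + 6d₅ + 6d₆ + 3d₇ + 3d₈, and b(w, w) = −12. -/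
/-- Negative of the standard Euclidean inner product on `ℤ⁸`. -/
def b8 (v w : Fin 8 → ℤ) : ℤ := - ∑ i, v i * w i

/-- The root lattice `D₈`: integer vectors with even coordinate sum. -/
def D8 : Set (Fin 8 → ℤ) := {v | Even (∑ i, v i)}

/-- Standard basis of `ℤ⁸`. -/
def e8 (i : Fin 8) : Fin 8 → ℤ := Pi.single i 1

/-- Simple roots of `D₈`: `d8 i` is `d_{i+1}` of the paper (1-based numbering), i.e.
`d_i = e_i − e_{i+1}` for `1 ≤ i ≤ 7` and `d₈ = e₇ + e₈`. -/
def d8 (i : Fin 8) : Fin 8 → ℤ :=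
  if h : (i : ℕ) + 1 < 8 then e8 i - e8 ⟨(i : ℕ) + 1, h⟩ else e8 6 + e8 7

lemma d8_0 : d8 0 = ![1,-1,0,0,0,0,0,0] := by
  funext i; fin_cases i <;> simp [d8, e8, Pi.single, Function.update] <;> rfl
lemma d8_1 : d8 1 = ![0,1,-1,0,0,0,0,0] := by
  funext i; fin_cases i <;> simp [d8, e8, Pi.single, Function.update] <;> rfl
lemma d8_2 : d8 2 = ![0,0,1,-1,0,0,0,0] := by
  funext i; fin_cases i <;> simp [d8, e8, Pi.single, Function.update] <;> rfl
lemma d8_3 : d8 3 = ![0,0,0,1,-1,0,0,0] := by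
  funext i; fin_cases i <;> simp [d8, e8, Pi.single, Function.update] <;> rfl
lemma d8_4 : d8 4 = ![0,0,0,0,1,-1,0,0] := by
  funext i; fin_cases i <;> simp [d8, e8, Pi.single, Function.update] <;> rfl
lemma d8_5 : d8 5 = ![0,0,0,0,0,1,-1,0] := by
  funext i; fin_cases i <;> simp [d8, e8, Pi.single, Function.update] <;> rfl
lemma d8_6 : d8 6 = ![0,0,0,0,0,0,1,-1] := by
  funext i; fin_cases i <;> simp [d8, e8, Pi.single, Function.update] <;> rfl
lemma d8_7 : d8 7 = ![0,0,0,0,0,0,1,1] := by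
  funext i; fin_cases i <;> simp [d8, e8, Pi.single, Function.update] <;> rfl


lemma vec8_5 (a0 a1 a2 a3 a4 a5 a6 a7 : ℤ) : ![a0,a1,a2,a3,a4,a5,a6,a7] (5:Fin 8) = a5 := rfl
lemma vec8_6 (a0 a1 a2 a3 a4 a5 a6 a7 : ℤ) : ![a0,a1,a2,a3,a4,a5,a6,a7] (6:Fin 8) = a6 := rfl
lemma vec8_7 (a0 a1 a2 a3 a4 a5 a6 a7 : ℤ) : ![a0,a1,a2,a3,a4,a5,a6,a7] (7:Fin 8) = a7 := rfl

/-- Lemma 2.1(1): the orthogonal complement in `D₈` of the copy of `A₂ ⊕ D₅` generated by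
`{d₈, d₆, d₇, d₅, d₄, d₁, d₂}` is `ℤ·w` with
`w = 2d₁ + 4d₂ + 6d₃ + 6d₄ + 6d₅ + 6d₆ + 3d₇ + 3d₈`, and `b(w, w) = −12`. -/
theorem stmt0 (w : Fin 8 → ℤ)
    (hw : w = (2 : ℤ) • d8 0 + (4 : ℤ) • d8 1 + (6 : ℤ) • d8 2 + (6 : ℤ) • d8 3
        + (6 : ℤ) • d8 4 + (6 : ℤ) • d8 5 + (3 : ℤ) • d8 6 + (3 : ℤ) • d8 7) :
    b8 w w = -12 ∧
    {v | v ∈ D8 ∧ ∀ s ∈ ({d8 7, d8 5, d8 6, d8 4, d8 3, d8 0, d8 1} : Set (Fin 8 → ℤ)),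
        b8 v s = 0}
      = {v | ∃ c : ℤ, v = c • w} := by
  have hw' : w = ![2,2,2,0,0,0,0,0] := by
    rw [hw, d8_0, d8_1, d8_2, d8_3, d8_4, d8_5, d8_6, d8_7]
    funext i; fin_cases i <;> simp [vec8_5, vec8_6, vec8_7]
  subst hw'
  constructor
  · simp [b8, Fin.sum_univ_eight, vec8_5, vec8_6, vec8_7]
  · ext v
    simp only [Set.mem_setOf_eq, Set.mem_insert_iff, Set.mem_singleton_iff, D8,
      d8_0, d8_1, d8_3, d8_4, d8_5, d8_6, d8_7, b8, Fin.sum_univ_eight, vec8_5, vec8_6, vec8_7]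
    constructor
    · rintro ⟨⟨r, hr⟩, h⟩
      have h7 := h _ (Or.inl rfl)
      have h5 := h _ (Or.inr (Or.inl rfl))
      have h6 := h _ (Or.inr (Or.inr (Or.inl rfl)))
      have h4 := h _ (Or.inr (Or.inr (Or.inr (Or.inl rfl))))
      have h3 := h _ (Or.inr (Or.inr (Or.inr (Or.inr (Or.inl rfl)))))
      have h0 := h _ (Or.inr (Or.inr (Or.inr (Or.inr (Or.inr (Or.inl rfl))))))
      have h1 := h _ (Or.inr (Or.inr (Or.inr (Or.inr (Or.inr (Or.inr rfl))))))
      simp only [Matrix.cons_val_zero, Matrix.cons_val_one, Matrix.head_cons,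
        Matrix.cons_val_two, Matrix.tail_cons, Matrix.cons_val_three,
        Matrix.cons_val_four, vec8_5, vec8_6, vec8_7] at h7 h5 h6 h4 h3 h0 h1
      refine ⟨r - v 0, ?_⟩
      funext i; fin_cases i <;> simp [vec8_5, vec8_6, vec8_7] <;> omega
    · rintro ⟨c, rfl⟩
      refine ⟨⟨3 * c, by simp [vec8_5, vec8_6, vec8_7]; ring⟩, ?_⟩
      rintro s (rfl | rfl | rfl | rfl | rfl | rfl | rfl) <;> simp [vec8_5, vec8_6, vec8_7]
end

section
/- Let D₉ be the root lattice realized inside ℤ⁹ (with bilinear form b equal to the negative of the standard Euclidean inner product) as the sublattice of vectors with even coordinate sum, with simple roots d_i = e_i − e_{i+1} for 1 ≤ i ≤ 8 and d₉ = e₈ + e₉. Then the orthogonal complement in D₉ of the sublattice generated by {d₉, d₇, d₈, d₆, d₅, d₃, d₂} (a copy of A₂ ⊕ D₅) is the rank‑two lattice with ℤ‑basis g₁ = d₉ + d₈ + 2d₇ + 2d₆ + 2d₅ + 2d₄ + d₃ − d₁ and g₂ = d₃ + 2d₂ + 3d₁, whose Gram matrix with respect to (g₁, g₂) is [[−4,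 6], [6, −12]], of determinant 12. -/
/-- Negative of the standard Euclidean inner product on `ℤ⁹`. -/
def b9 (v w : Fin 9 → ℤ) : ℤ := - ∑ i, v i * w i

/-- The root lattice `D₉`: integer vectors with even coordinate sum. -/
def D9 : Set (Fin 9 → ℤ) := {v | Even (∑ i, v i)}

/-- Standard basis of `ℤ⁹`. -/
def e9 (i : Fin 9) : Fin 9 → ℤ := Pi.single i 1

/-- Simple roots of `D₉`: `d9 i` is `d_{i+1}` of the paper (1-based numbering), i.e.
`d_i = e_i − e_{i+1}` for `1 ≤ i ≤ 8` and `d₉ = e₈ + e₉`. -/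
def d9 (i : Fin 9) : Fin 9 → ℤ :=
  if h : (i : ℕ) + 1 < 9 then e9 i - e9 ⟨(i : ℕ) + 1, h⟩ else e9 7 + e9 8

theorem sum9 (f : Fin 9 → ℤ) :
    ∑ i, f i = f 0 + f 1 + f 2 + f 3 + f 4 + f 5 + f 6 + f 7 + f 8 := by
  simp [Fin.sum_univ_succ,
    show Fin.succ (2:Fin 8) = (3:Fin 9) from rfl,
    show (Fin.succ (2:Fin 7)).succ = (4:Fin 9) from rfl,
    show (Fin.succ (2:Fin 6)).succ.succ = (5:Fin 9) from rfl,
    show (Fin.succ (2:Fin 5)).succ.succ.succ = (6:Fin 9) from rfl,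
    show (Fin.succ (2:Fin 4)).succ.succ.succ.succ = (7:Fin 9) from rfl,
    show (Fin.succ (2:Fin 3)).succ.succ.succ.succ.succ = (8:Fin 9) from rfl]
  ring

theorem bd0 (v : Fin 9 → ℤ) : b9 v (d9 0) = v 1 - v 0 := by
  rw [b9, sum9]
  rw [show d9 0 0 = 1 from rfl, show d9 0 1 = -1 from rfl, show d9 0 2 = 0 from rfl,
    show d9 0 3 = 0 from rfl, show d9 0 4 = 0 from rfl, show d9 0 5 = 0 from rfl,
    show d9 0 6 = 0 from rfl, show d9 0 7 = 0 from rfl, show d9 0 8 = 0 from rfl]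
  ring

theorem bd1 (v : Fin 9 → ℤ) : b9 v (d9 1) = v 2 - v 1 := by
  rw [b9, sum9]
  rw [show d9 1 0 = 0 from rfl, show d9 1 1 = 1 from rfl, show d9 1 2 = -1 from rfl,
    show d9 1 3 = 0 from rfl, show d9 1 4 = 0 from rfl, show d9 1 5 = 0 from rfl,
    show d9 1 6 = 0 from rfl, show d9 1 7 = 0 from rfl, show d9 1 8 = 0 from rfl]
  ring

theorem bd2 (v : Fin 9 → ℤ) : b9 v (d9 2) = v 3 - v 2 := by
  rw [b9, sum9]
  rw [show d9 2 0 = 0 from rfl, show d9 2 1 = 0 from rfl, show d9 2 2 = 1 from rfl,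
    show d9 2 3 = -1 from rfl, show d9 2 4 = 0 from rfl, show d9 2 5 = 0 from rfl,
    show d9 2 6 = 0 from rfl, show d9 2 7 = 0 from rfl, show d9 2 8 = 0 from rfl]
  ring

theorem bd4 (v : Fin 9 → ℤ) : b9 v (d9 4) = v 5 - v 4 := by
  rw [b9, sum9]
  rw [show d9 4 0 = 0 from rfl, show d9 4 1 = 0 from rfl, show d9 4 2 = 0 from rfl,
    show d9 4 3 = 0 from rfl, show d9 4 4 = 1 from rfl, show d9 4 5 = -1 from rfl,
    show d9 4 6 = 0 from rfl, show d9 4 7 = 0 from rfl, show d9 4 8 = 0 from rfl]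
  ring

theorem bd5 (v : Fin 9 → ℤ) : b9 v (d9 5) = v 6 - v 5 := by
  rw [b9, sum9]
  rw [show d9 5 0 = 0 from rfl, show d9 5 1 = 0 from rfl, show d9 5 2 = 0 from rfl,
    show d9 5 3 = 0 from rfl, show d9 5 4 = 0 from rfl, show d9 5 5 = 1 from rfl,
    show d9 5 6 = -1 from rfl, show d9 5 7 = 0 from rfl, show d9 5 8 = 0 from rfl]
  ring

theorem bd6 (v : Fin 9 → ℤ) : b9 v (d9 6) = v 7 - v 6 := by
  rw [b9, sum9]
  rw [show d9 6 0 = 0 from rfl, show d9 6 1 = 0 from rfl, show d9 6 2 = 0 from rfl,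
    show d9 6 3 = 0 from rfl, show d9 6 4 = 0 from rfl, show d9 6 5 = 0 from rfl,
    show d9 6 6 = 1 from rfl, show d9 6 7 = -1 from rfl, show d9 6 8 = 0 from rfl]
  ring

theorem bd7 (v : Fin 9 → ℤ) : b9 v (d9 7) = v 8 - v 7 := by
  rw [b9, sum9]
  rw [show d9 7 0 = 0 from rfl, show d9 7 1 = 0 from rfl, show d9 7 2 = 0 from rfl,
    show d9 7 3 = 0 from rfl, show d9 7 4 = 0 from rfl, show d9 7 5 = 0 from rfl,
    show d9 7 6 = 0 from rfl, show d9 7 7 = 1 from rfl, show d9 7 8 = -1 from rfl]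
  ring

theorem bd8 (v : Fin 9 → ℤ) : b9 v (d9 8) = -(v 7) - v 8 := by
  rw [b9, sum9]
  rw [show d9 8 0 = 0 from rfl, show d9 8 1 = 0 from rfl, show d9 8 2 = 0 from rfl,
    show d9 8 3 = 0 from rfl, show d9 8 4 = 0 from rfl, show d9 8 5 = 0 from rfl,
    show d9 8 6 = 0 from rfl, show d9 8 7 = 1 from rfl, show d9 8 8 = 1 from rfl]
  ring

/-- Lemma 2.1(2): the orthogonal complement in `D₉` of the copy of `A₂ ⊕ D₅` generated by
`{d₉, d₇, d₈, d₆, d₅, d₃, d₂}` is the rank-two lattice with ℤ-basis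
`g₁ = d₉ + d₈ + 2d₇ + 2d₆ + 2d₅ + 2d₄ + d₃ − d₁` and `g₂ = d₃ + 2d₂ + 3d₁`,
with Gram matrix `[[−4, 6], [6, −12]]` of determinant `12`. -/
theorem stmt1 (g1 g2 : Fin 9 → ℤ)
    (hg1 : g1 = d9 8 + d9 7 + (2 : ℤ) • d9 6 + (2 : ℤ) • d9 5 + (2 : ℤ) • d9 4
        + (2 : ℤ) • d9 3 + d9 2 - d9 0)
    (hg2 : g2 = d9 2 + (2 : ℤ) • d9 1 + (3 : ℤ) • d9 0) :
    {v | v ∈ D9 ∧ ∀ s ∈ ({d9 8, d9 6, d9 7, d9 5, d9 4, d9 2, d9 1} : Set (Fin 9 → ℤ)),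
        b9 v s = 0}
      = {v | ∃ c1 c2 : ℤ, v = c1 • g1 + c2 • g2}
    ∧ LinearIndependent ℤ ![g1, g2]
    ∧ !![b9 g1 g1, b9 g1 g2; b9 g2 g1, b9 g2 g2] = !![-4, 6; 6, -12]
    ∧ (!![(-4 : ℤ), 6; 6, -12]).det = 12 := by
  have hg1' : g1 = ![-1,1,1,1,0,0,0,0,0] := by
    rw [hg1]; funext i; fin_cases i <;> simp [d9, e9] <;> decide
  have hg2' : g2 = ![3,-1,-1,-1,0,0,0,0,0] := by
    rw [hg2]; funext i; fin_cases i <;> simp [d9, e9] <;> decide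
  subst hg1' hg2'
  refine ⟨?_, ?_, by decide, by decide⟩
  · ext v
    simp only [Set.mem_setOf_eq, Set.mem_insert_iff, Set.mem_singleton_iff, D9,
      forall_eq_or_imp, forall_eq]
    constructor
    · rintro ⟨hD, h8, h6, h7, h5, h4, h2, h1⟩
      rw [bd8 v] at h8; rw [bd6 v] at h6; rw [bd7 v] at h7; rw [bd5 v] at h5
      rw [bd4 v] at h4; rw [bd2 v] at h2; rw [bd1 v] at h1
      rw [sum9] at hD
      obtain ⟨k, hk⟩ := hD
      refine ⟨k, k - v 1, ?_⟩
      have e0 : v 0 = (k • (![-1,1,1,1,0,0,0,0,0] : Fin 9 → ℤ)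
          + (k - v 1) • (![3,-1,-1,-1,0,0,0,0,0] : Fin 9 → ℤ)) 0 := by
        show v 0 = k * (-1) + (k - v 1) * 3; omega
      have e1 : v 1 = (k • (![-1,1,1,1,0,0,0,0,0] : Fin 9 → ℤ)
          + (k - v 1) • (![3,-1,-1,-1,0,0,0,0,0] : Fin 9 → ℤ)) 1 := by
        show v 1 = k * 1 + (k - v 1) * (-1); omega
      have e2 : v 2 = (k • (![-1,1,1,1,0,0,0,0,0] : Fin 9 → ℤ)
          + (k - v 1) • (![3,-1,-1,-1,0,0,0,0,0] : Fin 9 → ℤ)) 2 := by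
        show v 2 = k * 1 + (k - v 1) * (-1); omega
      have e3 : v 3 = (k • (![-1,1,1,1,0,0,0,0,0] : Fin 9 → ℤ)
          + (k - v 1) • (![3,-1,-1,-1,0,0,0,0,0] : Fin 9 → ℤ)) 3 := by
        show v 3 = k * 1 + (k - v 1) * (-1); omega
      have e4 : v 4 = (k • (![-1,1,1,1,0,0,0,0,0] : Fin 9 → ℤ)
          + (k - v 1) • (![3,-1,-1,-1,0,0,0,0,0] : Fin 9 → ℤ)) 4 := by
        show v 4 = k * 0 + (k - v 1) * 0; omega
      have e5 : v 5 = (k • (![-1,1,1,1,0,0,0,0,0] : Fin 9 → ℤ)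
          + (k - v 1) • (![3,-1,-1,-1,0,0,0,0,0] : Fin 9 → ℤ)) 5 := by
        show v 5 = k * 0 + (k - v 1) * 0; omega
      have e6 : v 6 = (k • (![-1,1,1,1,0,0,0,0,0] : Fin 9 → ℤ)
          + (k - v 1) • (![3,-1,-1,-1,0,0,0,0,0] : Fin 9 → ℤ)) 6 := by
        show v 6 = k * 0 + (k - v 1) * 0; omega
      have e7 : v 7 = (k • (![-1,1,1,1,0,0,0,0,0] : Fin 9 → ℤ)
          + (k - v 1) • (![3,-1,-1,-1,0,0,0,0,0] : Fin 9 → ℤ)) 7 := by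
        show v 7 = k * 0 + (k - v 1) * 0; omega
      have e8 : v 8 = (k • (![-1,1,1,1,0,0,0,0,0] : Fin 9 → ℤ)
          + (k - v 1) • (![3,-1,-1,-1,0,0,0,0,0] : Fin 9 → ℤ)) 8 := by
        show v 8 = k * 0 + (k - v 1) * 0; omega
      funext i; fin_cases i <;> assumption
    · rintro ⟨c1, c2, rfl⟩
      refine ⟨?_, ?_, ?_, ?_, ?_, ?_, ?_, ?_⟩
      · rw [sum9]
        exact ⟨c1, by
          show c1 * (-1) + c2 * 3 + (c1 * 1 + c2 * (-1)) + (c1 * 1 + c2 * (-1))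
            + (c1 * 1 + c2 * (-1)) + (c1 * 0 + c2 * 0) + (c1 * 0 + c2 * 0)
            + (c1 * 0 + c2 * 0) + (c1 * 0 + c2 * 0) + (c1 * 0 + c2 * 0) = c1 + c1
          ring⟩
      · rw [bd8]
        show -(c1 * 0 + c2 * 0) - (c1 * 0 + c2 * 0) = 0; ring
      · rw [bd6]
        show (c1 * 0 + c2 * 0) - (c1 * 0 + c2 * 0) = 0; ring
      · rw [bd7]
        show (c1 * 0 + c2 * 0) - (c1 * 0 + c2 * 0) = 0; ring
      · rw [bd5]
        show (c1 * 0 + c2 * 0) - (c1 * 0 + c2 * 0) = 0; ring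
      · rw [bd4]
        show (c1 * 0 + c2 * 0) - (c1 * 0 + c2 * 0) = 0; ring
      · rw [bd2]
        show (c1 * 1 + c2 * (-1)) - (c1 * 1 + c2 * (-1)) = 0; ring
      · rw [bd1]
        show (c1 * 1 + c2 * (-1)) - (c1 * 1 + c2 * (-1)) = 0; ring
  · rw [LinearIndependent.pair_iff]
    intro s t hst
    have h0 : s * (-1) + t * 3 = 0 := congrFun hst 0
    have h1 : s * 1 + t * (-1) = 0 := congrFun hst 1
    constructor <;> omega
end

section
/- Let n ≥ 10 and let D_n be the root lattice realized inside ℤⁿ (with bilinear form b equal to the negative of the standard Euclidean inner product), with simple roots d_i = e_i − e_{i+1} for 1 ≤ i ≤ n−1 and d_n = e_{n−1} + e_n. Let N be the orthogonal complement in D_n of the sublattice generated by {d_n, d_{n−2}, d_{n−1}, d_{n−3}, d_{n−4}, d_{n−7}, d_{n−6}} (a copy of A₂ ⊕ D₅). Then: (i) N is generated by a = d_n + d_{n−1} + 2(d_{n−2} + ⋯ + d₂) + d₁, by d_{n−6} + 2d_{n−7} + 3d_{n−8}, and by d_{n−9}, …, d₁; (ii) the root sublattice of N (the ℤ‑span of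 the vectors v ∈ N with b(v,v) = −2) has ℤ‑basis {a, d₁, …, d_{n−9}} and is a copy of the root lattice D_{n−8} (negative definite); (iii) with the glue vector [2]_{D_n} = Σ_{i=1}^{n−2} d_i + ½(d_{n−1} + d_n) ∈ ℚⁿ, one has 2·[2]_{D_n} = a + d₁. -/
open Finset

/-- Standard basis vector of `ℤⁿ`. -/
def stdE (n : ℕ) (i : Fin n) : Fin n → ℤ := Pi.single i 1

/-- Simple roots of the root lattice `D_n`: `dRoot n i` is `d_{i+1}` of the paper
(1-based numbering), i.e. `d_i = e_i − e_{i+1}` for `1 ≤ i ≤ n−1` and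
`d_n = e_{n−1} + e_n`. -/
def dRoot (n : ℕ) (i : Fin n) : Fin n → ℤ :=
  if h : (i : ℕ) + 1 < n then stdE n i - stdE n ⟨(i : ℕ) + 1, h⟩
  else stdE n ⟨n - 2, by have := i.isLt; omega⟩ + stdE n i

/-- Negative of the standard Euclidean inner product on `ℤⁿ`. -/
def bD (n : ℕ) (v w : Fin n → ℤ) : ℤ := - ∑ i, v i * w i

/-- The root lattice `D_n`: integer vectors with even coordinate sum. -/
def Dlat (n : ℕ) : Set (Fin n → ℤ) := {v | Even (∑ i, v i)}

/-!
Orthogonality to the seven roots forces the last eight coordinates of `v ∈ N` (0-based, as in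
`dRoot`) to be `(c, c, c, 0, 0, 0, 0, 0)` with `c = v (n - 8)`. With
`w = d_{n-7} + 2 d_{n-8} + 3 d_{n-9} = 3 e_{n-9} - e_{n-8} - e_{n-7} - e_{n-6}` this says exactly
that `v + c • w` lies in the copy of `D_{n-8}` on the first `n - 8` coordinates, so
`N = D_{n-8} ⊕ ℤ w`. A root of `N` (`bD v v = -2`) has `3 c² ≤ 2`, so `c = 0`: the roots of `N`
span `D_{n-8}`. That `D_m` is spanned by `e₀ + e₁, d₀, …, d_{m-2}` follows from
`e_k - e₀ = -(d₀ + ⋯ + d_{k-1})` and `2 e₀ = (e₀ + e₁) + d₀`; their independence is witnessed by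
the dual family of tail sums. The formulas for `a` and for the glue vector are telescoping sums.
-/

theorem LinearIndependent.of_pairwise_dual_eq_zero_ne_zero {ι R M : Type*} [CommRing R]
    [IsDomain R] [AddCommGroup M] [Module R M] (v : ι → M) (f : ι → Module.Dual R M)
    (h1 : Pairwise fun i j ↦ f i (v j) = 0) (h2 : ∀ i, f i (v i) ≠ 0) :
    LinearIndependent R v := by
  refine linearIndependent_iff'.mpr fun s g hrel i hi ↦ ?_
  have aux (j : ι) (_ : j ∈ s) (hji : j ≠ i) : g j * f i (v j) = 0 := by simp [h1 hji.symm]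
  have := congr_arg (f i) hrel
  simp only [map_sum, map_smul, smul_eq_mul, map_zero,
    s.sum_eq_single i aux (by simp [hi])] at this
  exact (mul_eq_zero.1 this).resolve_right (h2 i)

section

open Matrix

variable {n : ℕ}

/-- The `k`-th standard basis vector of `ℤⁿ`, indexed by a natural number; it is `0` when
`n ≤ k`. -/
def unitVec (n k : ℕ) : Fin n → ℤ := fun j => if (j : ℕ) = k then 1 else 0

lemma dotProduct_unitVec (v : Fin n → ℤ) (i : Fin n) : v ⬝ᵥ unitVec n i = v i := by
  rw [show unitVec n i = Pi.single i 1 by ext j; simp [unitVec, Pi.single_apply, Fin.ext_iff]]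
  exact dotProduct_single_one v i

lemma dotProduct_unitVec_mk (v : Fin n → ℤ) (k : ℕ) (hk : k < n) :
    v ⬝ᵥ unitVec n k = v ⟨k, hk⟩ :=
  dotProduct_unitVec v ⟨k, hk⟩

lemma dRoot_eq_sub (i : Fin n) (hi : (i : ℕ) + 1 < n) :
    dRoot n i = unitVec n i - unitVec n (i + 1) := by
  ext j
  simp [dRoot, hi, stdE, Pi.single_apply, unitVec, Fin.ext_iff]

lemma dRoot_last (hn : 2 ≤ n) :
    dRoot n ⟨n - 1, by omega⟩ = unitVec n (n - 2) + unitVec n (n - 1) := by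
  ext j
  simp [dRoot, show ¬ n - 1 + 1 < n by omega, stdE, Pi.single_apply, unitVec, Fin.ext_iff]

lemma bD_eq_neg_dotProduct (v w : Fin n → ℤ) : bD n v w = -(v ⬝ᵥ w) := rfl

lemma bD_dRoot (v : Fin n → ℤ) (i j : Fin n) (hj : (j : ℕ) = i + 1) :
    bD n v (dRoot n i) = v j - v i := by
  rw [bD_eq_neg_dotProduct, dRoot_eq_sub i (hj ▸ j.isLt), dotProduct_sub, ← hj,
    dotProduct_unitVec, dotProduct_unitVec]
  ring

lemma bD_dRoot_last (hn : 2 ≤ n) (v : Fin n → ℤ) :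
    bD n v (dRoot n ⟨n - 1, by omega⟩) = -(v ⟨n - 2, by omega⟩ + v ⟨n - 1, by omega⟩) := by
  rw [bD_eq_neg_dotProduct, dRoot_last hn, dotProduct_add, dotProduct_unitVec_mk,
    dotProduct_unitVec_mk]

lemma sum_dRoot_filter_Icc (p q : ℕ) (hpq : p ≤ q + 1) (hq : q + 1 < n) :
    ∑ i ∈ univ.filter (fun i : Fin n => p ≤ (i : ℕ) ∧ (i : ℕ) ≤ q), dRoot n i
      = unitVec n p - unitVec n (q + 1) := by
  have himage : (univ.filter (fun i : Fin n => p ≤ (i : ℕ) ∧ (i : ℕ) ≤ q)).image Fin.val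
      = Ico p (q + 1) := by
    ext k
    simp only [mem_image, mem_filter, mem_univ, true_and, mem_Ico]
    exact ⟨fun ⟨i, hi, hik⟩ => hik ▸ ⟨hi.1, by omega⟩,
      fun hk => ⟨⟨k, by omega⟩, by simp; omega, rfl⟩⟩
  calc ∑ i ∈ univ.filter (fun i : Fin n => p ≤ (i : ℕ) ∧ (i : ℕ) ≤ q), dRoot n i
      = ∑ i ∈ univ.filter (fun i : Fin n => p ≤ (i : ℕ) ∧ (i : ℕ) ≤ q),
          -(unitVec n (i + 1) - unitVec n i) :=
        sum_congr rfl fun i hi => by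
          rw [neg_sub, dRoot_eq_sub i (by simp at hi; omega)]
    _ = -∑ k ∈ Ico p (q + 1), (unitVec n (k + 1) - unitVec n k) := by
        rw [sum_neg_distrib, ← himage, sum_image Fin.val_injective.injOn]
    _ = unitVec n p - unitVec n (q + 1) := by rw [sum_Ico_sub _ hpq, neg_sub]

lemma sum_unitVec {k : ℕ} (hk : k < n) : ∑ j, unitVec n k j = 1 := by
  rw [← one_dotProduct, dotProduct_unitVec_mk _ k hk, Pi.one_apply]

lemma sum_smul_unitVec (v : Fin n → ℤ) : ∑ i : Fin n, v i • unitVec n i = v := by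
  ext j
  simp [Finset.sum_apply, unitVec, Fin.val_inj]

lemma bD_self_neg {v : Fin n → ℤ} (hv : v ≠ 0) : bD n v v < 0 := by
  rw [bD_eq_neg_dotProduct, neg_neg_iff_pos]
  exact lt_of_le_of_ne (sum_nonneg fun i _ => mul_self_nonneg (v i))
    (Ne.symm (dotProduct_self_eq_zero.not.2 hv))

lemma bD_unitVec_add_unitVec {p q : ℕ} (hpq : p ≠ q) (hp : p < n) (hq : q < n) :
    bD n (unitVec n p + unitVec n q) (unitVec n p + unitVec n q) = -2 := by
  simp [bD_eq_neg_dotProduct, dotProduct_unitVec_mk _ _ hp, dotProduct_unitVec_mk _ _ hq,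
    unitVec, hpq, hpq.symm]

lemma bD_dRoot_self (i : Fin n) (hi : (i : ℕ) + 1 < n) : bD n (dRoot n i) (dRoot n i) = -2 := by
  simp only [bD_eq_neg_dotProduct, dRoot_eq_sub i hi, dotProduct_sub, sub_dotProduct,
    dotProduct_unitVec_mk _ _ hi, dotProduct_unitVec]
  simp [unitVec]

/-- The root lattice `D_m`, embedded in the first `m` coordinates of `ℤⁿ`. -/
def dSublattice (n m : ℕ) : Submodule ℤ (Fin n → ℤ) where
  carrier := {v | (∀ i : Fin n, m ≤ (i : ℕ) → v i = 0) ∧ Even (∑ i, v i)}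
  zero_mem' := by simp
  add_mem' := by
    rintro x y ⟨hx, hx'⟩ ⟨hy, hy'⟩
    refine ⟨fun i hi => by simp [hx i hi, hy i hi], ?_⟩
    simpa only [Pi.add_apply, sum_add_distrib] using hx'.add hy'
  smul_mem' := by
    rintro c x ⟨hx, hx'⟩
    refine ⟨fun i hi => by simp [hx i hi], ?_⟩
    simpa only [Pi.smul_apply, smul_eq_mul, ← mul_sum] using hx'.mul_left c

def dRootsUpTo (n k : ℕ) : Set (Fin n → ℤ) := {x | ∃ i : Fin n, (i : ℕ) ≤ k ∧ x = dRoot n i}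

lemma unitVec_add_unitVec_mem {m p q : ℕ} (hp : p < m) (hq : q < m) (hmn : m ≤ n) :
    unitVec n p + unitVec n q ∈ dSublattice n m := by
  refine ⟨fun i hi => by simp [unitVec]; omega, ?_⟩
  rw [show ∑ i, (unitVec n p + unitVec n q) i = 2 by
    simp only [Pi.add_apply, sum_add_distrib, sum_unitVec (by omega : p < n),
      sum_unitVec (by omega : q < n)]
    norm_num]
  exact even_two

lemma dRoot_mem (i : Fin n) {m : ℕ} (hi : (i : ℕ) + 1 < m) (hmn : m ≤ n) :
    dRoot n i ∈ dSublattice n m := by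
  rw [dRoot_eq_sub i (by omega)]
  refine ⟨fun j hj => by simp [unitVec]; omega, ?_⟩
  simp only [Pi.sub_apply, sum_sub_distrib, sum_unitVec i.isLt,
    sum_unitVec (by omega : (i : ℕ) + 1 < n), sub_self, Even.zero]

lemma unitVec_sub_unitVec_zero_mem {L : Submodule ℤ (Fin n → ℤ)} {m : ℕ} (hmn : m ≤ n)
    (hL : dRootsUpTo n (m - 2) ⊆ L) {k : ℕ} (hk : k < m) : unitVec n k - unitVec n 0 ∈ L := by
  induction k with
  | zero => simp
  | succ k ih =>
    have hd : dRoot n ⟨k, by omega⟩ ∈ L := hL ⟨⟨k, by omega⟩, by simp; omega, rfl⟩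
    rw [dRoot_eq_sub _ (by simp; omega)] at hd
    simpa using L.sub_mem (ih (by omega)) hd

lemma span_unitVec_add_unitVec_union_dRootsUpTo {m : ℕ} (hm : 2 ≤ m) (hmn : m ≤ n) :
    Submodule.span ℤ ({unitVec n 0 + unitVec n 1} ∪ dRootsUpTo n (m - 2)) = dSublattice n m := by
  apply le_antisymm
  · rw [Submodule.span_le]
    rintro x (rfl | ⟨i, hi, rfl⟩)
    · exact unitVec_add_unitVec_mem (by omega) (by omega) hmn
    · exact dRoot_mem i (by omega) hmn
  · rintro v ⟨hsupp, t, ht⟩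
    set L := Submodule.span ℤ ({unitVec n 0 + unitVec n 1} ∪ dRootsUpTo n (m - 2))
    have hroots : dRootsUpTo n (m - 2) ⊆ L := Set.subset_union_right.trans Submodule.subset_span
    have htwo : (2 : ℤ) • unitVec n 0 ∈ L := by
      have hd : dRoot n ⟨0, by omega⟩ ∈ L := hroots ⟨⟨0, by omega⟩, by simp, rfl⟩
      rw [dRoot_eq_sub _ (by simp; omega)] at hd
      have := L.add_mem (Submodule.subset_span (Or.inl rfl)) hd
      convert this using 1
      simp only [zero_add]
      module
    have hdecomp : v = ∑ i, v i • (unitVec n i - unitVec n 0) + t • (2 : ℤ) • unitVec n 0 := by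
      simp only [smul_sub, sum_sub_distrib, sum_smul_unitVec, ← sum_smul, ht]
      module
    rw [hdecomp]
    refine L.add_mem (L.sum_mem fun i _ => ?_) (L.smul_mem t htwo)
    by_cases hi : (i : ℕ) < m
    · exact L.smul_mem _ (unitVec_sub_unitVec_zero_mem hmn hroots hi)
    · simp [hsupp i (not_lt.1 hi)]

def tailVec (n p : ℕ) : Fin n → ℤ := fun j => if p ≤ (j : ℕ) then 1 else 0

lemma tailVec_dotProduct_unitVec (p q : ℕ) :
    tailVec n p ⬝ᵥ unitVec n q = if q < n ∧ p ≤ q then 1 else 0 := by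
  by_cases hq : q < n
  · simp [dotProduct_unitVec_mk _ q hq, tailVec, hq]
  · simp [show unitVec n q = 0 by ext j; simp [unitVec]; omega, hq]

lemma unitVec_dotProduct_unitVec (p q : ℕ) :
    unitVec n p ⬝ᵥ unitVec n q = if q < n ∧ q = p then 1 else 0 := by
  by_cases hq : q < n
  · simp [dotProduct_unitVec_mk _ q hq, unitVec, hq]
  · simp [show unitVec n q = 0 by ext j; simp [unitVec]; omega, hq]

lemma linearIndependent_dRoot_unitVec {m k : ℕ} (hk : k + 1 = m) (hm : 2 ≤ m) (hmn : m ≤ n) :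
    LinearIndependent ℤ (fun j : Fin m =>
      if h : (j : ℕ) < k then dRoot n ⟨j, by omega⟩ else unitVec n 0 + unitVec n 1) := by
  set v := fun j : Fin m =>
      if h : (j : ℕ) < k then dRoot n ⟨j, by omega⟩ else unitVec n 0 + unitVec n 1
  have hv : ∀ j : Fin m, v j = if (j : ℕ) < k then unitVec n j - unitVec n (j + 1)
      else unitVec n 0 + unitVec n 1 := by
    intro j
    simp only [v]
    split_ifs
    · exact dRoot_eq_sub _ (by simp; omega)
    · rfl
  -- tail sums, i.e. the fundamental coweights up to sign and a factor `2`
  let u : Fin m → Fin n → ℤ := fun i =>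
    if (i : ℕ) = k then tailVec n 0
    else if (i : ℕ) = 0 then tailVec n 1 - unitVec n 0 else tailVec n (i + 1)
  have hpair : ∀ i j : Fin m, u i ⬝ᵥ v j
        = if i = j then (if (i : ℕ) = k then 2 else if (i : ℕ) = 0 then -2 else -1) else 0 := by
    intro i j
    have hi := i.isLt
    have hj := j.isLt
    simp only [hv, u, Fin.ext_iff]
    split_ifs <;>
      simp only [dotProduct_sub, dotProduct_add, sub_dotProduct, tailVec_dotProduct_unitVec,
        unitVec_dotProduct_unitVec] <;> split_ifs <;> first | omega | simp_all
  refine .of_pairwise_dual_eq_zero_ne_zero v (fun i => dotProductBilin ℤ ℤ (u i)) ?_ ?_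
  · intro i j hij
    simp [hpair, hij]
  · intro i
    simp only [dotProductBilin_apply_apply, hpair, if_true]
    split_ifs <;> norm_num

lemma a_eq_unitVec_add_unitVec (hn : 3 ≤ n) :
    dRoot n ⟨n - 1, by omega⟩ + dRoot n ⟨n - 2, by omega⟩
        + (2 : ℤ) • (∑ i ∈ univ.filter (fun i : Fin n => 1 ≤ (i : ℕ) ∧ (i : ℕ) ≤ n - 3),
            dRoot n i)
        + dRoot n ⟨0, by omega⟩ = unitVec n 0 + unitVec n 1 := by
  rw [sum_dRoot_filter_Icc 1 (n - 3) (by omega) (by omega), dRoot_last (by omega),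
    dRoot_eq_sub _ (by simp; omega), dRoot_eq_sub _ (by simp; omega)]
  simp only [show n - 3 + 1 = n - 2 by omega, show n - 2 + 1 = n - 1 by omega, zero_add]
  module

lemma two_smul_glue_eq (hn : 3 ≤ n) :
    (2 : ℚ) • ((∑ i ∈ univ.filter (fun i : Fin n => (i : ℕ) ≤ n - 3),
          fun j => ((dRoot n i j : ℤ) : ℚ))
        + (1 / 2 : ℚ) • ((fun j => ((dRoot n ⟨n - 2, by omega⟩ j : ℤ) : ℚ))
            + fun j => ((dRoot n ⟨n - 1, by omega⟩ j : ℤ) : ℚ)))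
      = fun j => ((((unitVec n 0 + unitVec n 1) + dRoot n ⟨0, by omega⟩) j : ℤ) : ℚ) := by
  have hsum := sum_dRoot_filter_Icc (n := n) 0 (n - 3) (by omega) (by omega)
  simp only [zero_le, true_and, show n - 3 + 1 = n - 2 by omega] at hsum
  ext j
  have hsumj : ∑ i ∈ univ.filter (fun i : Fin n => (i : ℕ) ≤ n - 3), ((dRoot n i j : ℤ) : ℚ)
      = ((unitVec n 0 - unitVec n (n - 2)) j : ℚ) := by
    rw [← Int.cast_sum, ← Finset.sum_apply, hsum]
  simp only [Finset.sum_apply, Pi.smul_apply, Pi.add_apply, smul_eq_mul, hsumj,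
    dRoot_last (n := n) (by omega), dRoot_eq_sub (⟨n - 2, _⟩ : Fin n) (by simp; omega),
    dRoot_eq_sub (⟨0, _⟩ : Fin n) (by simp; omega)]
  simp only [Pi.sub_apply, unitVec, show n - 2 + 1 = n - 1 by omega]
  split_ifs <;> norm_num

def wVec (n : ℕ) : Fin n → ℤ :=
  (3 : ℤ) • unitVec n (n - 9) - unitVec n (n - 8) - unitVec n (n - 7) - unitVec n (n - 6)

lemma wVec_eq (hn : 9 ≤ n) :
    wVec n = dRoot n ⟨n - 7, by omega⟩ + (2 : ℤ) • dRoot n ⟨n - 8, by omega⟩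
      + (3 : ℤ) • dRoot n ⟨n - 9, by omega⟩ := by
  rw [dRoot_eq_sub _ (by simp; omega), dRoot_eq_sub _ (by simp; omega),
    dRoot_eq_sub _ (by simp; omega)]
  simp only [show n - 9 + 1 = n - 8 by omega, show n - 8 + 1 = n - 7 by omega,
    show n - 7 + 1 = n - 6 by omega, wVec]
  module

lemma wVec_apply_of_le (hn : 9 ≤ n) (i : Fin n) (hi : n - 8 ≤ (i : ℕ)) :
    wVec n i = if (i : ℕ) ≤ n - 6 then -1 else 0 := by
  simp only [wVec, unitVec, Pi.sub_apply, Pi.smul_apply, smul_eq_mul]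
  split_ifs <;> omega

lemma sum_wVec (hn : 0 < n) : ∑ i, wVec n i = 0 := by
  simp only [wVec, Pi.sub_apply, Pi.smul_apply, smul_eq_mul, sum_sub_distrib, ← mul_sum,
    sum_unitVec (by omega : n - 9 < n), sum_unitVec (by omega : n - 8 < n),
    sum_unitVec (by omega : n - 7 < n), sum_unitVec (by omega : n - 6 < n)]
  norm_num

lemma add_smul_wVec_mem_iff (hn : 9 ≤ n) (v : Fin n → ℤ) (c : ℤ) :
    v + c • wVec n ∈ dSublattice n (n - 8)
      ↔ (∀ i : Fin n, n - 8 ≤ (i : ℕ) → v i = if (i : ℕ) ≤ n - 6 then c else 0)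
        ∧ Even (∑ i, v i) := by
  change (∀ i : Fin n, _ → (v + c • wVec n) i = 0) ∧ Even (∑ i, (v + c • wVec n) i) ↔ _
  simp only [Pi.add_apply, Pi.smul_apply, smul_eq_mul, sum_add_distrib, ← mul_sum,
    sum_wVec (by omega : 0 < n), mul_zero, add_zero]
  refine and_congr_left' (forall_congr' fun i => imp_congr_right fun hi => ?_)
  rw [wVec_apply_of_le hn i hi]
  split_ifs <;> omega

lemma forall_bD_a2d5_eq_zero_iff (hn : 8 ≤ n) (v : Fin n → ℤ) :
    (∀ s ∈ ({dRoot n ⟨n - 1, by omega⟩, dRoot n ⟨n - 3, by omega⟩, dRoot n ⟨n - 2, by omega⟩,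
        dRoot n ⟨n - 4, by omega⟩, dRoot n ⟨n - 5, by omega⟩, dRoot n ⟨n - 8, by omega⟩,
        dRoot n ⟨n - 7, by omega⟩} : Set (Fin n → ℤ)), bD n v s = 0)
      ↔ ∀ i : Fin n, n - 8 ≤ (i : ℕ) →
          v i = if (i : ℕ) ≤ n - 6 then v ⟨n - 8, by omega⟩ else 0 := by
  have h1 := bD_dRoot_last (by omega) v
  have h2 := bD_dRoot v ⟨n - 2, by omega⟩ ⟨n - 1, by omega⟩ (by simp; omega)
  have h3 := bD_dRoot v ⟨n - 3, by omega⟩ ⟨n - 2, by omega⟩ (by simp; omega)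
  have h4 := bD_dRoot v ⟨n - 4, by omega⟩ ⟨n - 3, by omega⟩ (by simp; omega)
  have h5 := bD_dRoot v ⟨n - 5, by omega⟩ ⟨n - 4, by omega⟩ (by simp; omega)
  have h7 := bD_dRoot v ⟨n - 7, by omega⟩ ⟨n - 6, by omega⟩ (by simp; omega)
  have h8 := bD_dRoot v ⟨n - 8, by omega⟩ ⟨n - 7, by omega⟩ (by simp; omega)
  simp only [Set.mem_insert_iff, Set.mem_singleton_iff, forall_eq_or_imp, forall_eq,
    h1, h2, h3, h4, h5, h7, h8]
  constructor
  · rintro ⟨e1, e3, e2, e4, e5, e8, e7⟩ ⟨k, hk⟩ hi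
    simp only at hi ⊢
    rcases (by omega : k = n - 8 ∨ k = n - 7 ∨ k = n - 6 ∨ k = n - 5 ∨ k = n - 4 ∨ k = n - 3
      ∨ k = n - 2 ∨ k = n - 1) with rfl | rfl | rfl | rfl | rfl | rfl | rfl | rfl <;>
      split_ifs <;> omega
  · intro h
    have hzero : ∀ k (hk : k < n), n - 5 ≤ k → v ⟨k, hk⟩ = 0 := fun k hk hk' => by
      simpa [show ¬ k ≤ n - 6 by omega] using h ⟨k, hk⟩ (by simp; omega)
    have hconst : ∀ k (hk : k < n), n - 8 ≤ k → k ≤ n - 6 → v ⟨k, hk⟩ = v ⟨n - 8, by omega⟩ :=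
      fun k hk hk' hk'' => by simpa [hk''] using h ⟨k, hk⟩ hk'
    simp only [hzero (n - 1) (by omega) (by omega), hzero (n - 2) (by omega) (by omega),
      hzero (n - 3) (by omega) (by omega), hzero (n - 4) (by omega) (by omega),
      hzero (n - 5) (by omega) (by omega), hconst (n - 6) (by omega) (by omega) (by omega),
      hconst (n - 7) (by omega) (by omega) (by omega)]
    simp

lemma orthComplement_a2d5_eq (hn : 9 ≤ n) :
    {v | v ∈ Dlat n ∧ ∀ s ∈ ({dRoot n ⟨n - 1, by omega⟩, dRoot n ⟨n - 3, by omega⟩,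
        dRoot n ⟨n - 2, by omega⟩, dRoot n ⟨n - 4, by omega⟩, dRoot n ⟨n - 5, by omega⟩,
        dRoot n ⟨n - 8, by omega⟩, dRoot n ⟨n - 7, by omega⟩} : Set (Fin n → ℤ)),
        bD n v s = 0}
      = {v | ∃ c : ℤ, v + c • wVec n ∈ dSublattice n (n - 8)} := by
  ext v
  simp only [Set.mem_ofPred_eq, forall_bD_a2d5_eq_zero_iff (n := n) (by omega),
    add_smul_wVec_mem_iff hn, Dlat]
  constructor
  · rintro ⟨heven, hv⟩
    exact ⟨_, hv, heven⟩
  · rintro ⟨c, hv, heven⟩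
    have hc : v ⟨n - 8, by omega⟩ = c := by
      have := hv ⟨n - 8, by omega⟩ le_rfl
      rwa [if_pos (by dsimp only; omega)] at this
    rw [hc]
    exact ⟨heven, hv⟩

lemma span_roots_eq_dSublattice (hn : 10 ≤ n) :
    Submodule.span ℤ {v | v ∈ {v : Fin n → ℤ | ∃ c : ℤ, v + c • wVec n ∈ dSublattice n (n - 8)}
        ∧ bD n v v = -2}
      = dSublattice n (n - 8) := by
  apply le_antisymm
  · rw [Submodule.span_le]
    rintro v ⟨⟨c, hv⟩, hnorm⟩
    suffices hc : c = 0 by rwa [hc, zero_smul, add_zero] at hv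
    have hcoord : ∀ k (hk : k < n), n - 8 ≤ k → k ≤ n - 6 → v ⟨k, hk⟩ = c :=
      fun k hk h8 h6 => by
        simpa [h6] using ((add_smul_wVec_mem_iff (by omega) v c).1 hv).1 ⟨k, hk⟩ h8
    have hsq : 3 * (c * c) ≤ 2 :=
      calc 3 * (c * c)
          = ∑ i ∈ {⟨n - 8, by omega⟩, ⟨n - 7, by omega⟩, ⟨n - 6, by omega⟩}, v i * v i := by
            rw [sum_insert (by simp [Fin.ext_iff]; omega),
              sum_insert (by simp [Fin.ext_iff]; omega), sum_singleton,
              hcoord (n - 8) _ le_rfl (by omega), hcoord (n - 7) _ (by omega) (by omega),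
              hcoord (n - 6) _ (by omega) le_rfl]
            ring
        _ ≤ ∑ i, v i * v i :=
            sum_le_sum_of_subset_of_nonneg (subset_univ _) fun i _ _ => mul_self_nonneg (v i)
        _ = 2 := by rw [bD_eq_neg_dotProduct] at hnorm; exact neg_inj.1 hnorm
    have hc0 : c * c = 0 := by
      have := mul_self_nonneg c
      omega
    exact mul_self_eq_zero.1 hc0
  · refine (span_unitVec_add_unitVec_union_dRootsUpTo (by omega) (by omega)).ge.trans
      (Submodule.span_mono ?_)
    have hmem : ∀ x ∈ dSublattice n (n - 8), ∃ c : ℤ, x + c • wVec n ∈ dSublattice n (n - 8) :=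
      fun x hx => ⟨0, by simpa using hx⟩
    rintro x (rfl | ⟨i, hi, rfl⟩)
    · exact ⟨hmem _ (unitVec_add_unitVec_mem (by omega) (by omega) (by omega)),
        bD_unitVec_add_unitVec zero_ne_one (by omega) (by omega)⟩
    · exact ⟨hmem _ (dRoot_mem i (by omega) (by omega)), bD_dRoot_self i (by omega)⟩

end

/-- Lemma 2.1(3): for `n ≥ 10`, the orthogonal complement `N` in `D_n` of the copy of
`A₂ ⊕ D₅` generated by `{d_n, d_{n−2}, d_{n−1}, d_{n−3}, d_{n−4}, d_{n−7}, d_{n−6}}`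
is generated by `a = d_n + d_{n−1} + 2(d_{n−2} + ⋯ + d₂) + d₁`,
`d_{n−6} + 2d_{n−7} + 3d_{n−8}` and `d_{n−9}, …, d₁`; its root sublattice has
ℤ-basis `{a, d₁, …, d_{n−9}}` and is a (negative definite) copy of `D_{n−8}`,
and `2·[2]_{D_n} = a + d₁`. -/
theorem stmt2 (n : ℕ) (hn : 10 ≤ n)
    -- the embedded copy of `A₂ ⊕ D₅`
    (S : Set (Fin n → ℤ))
    (hS : S = {dRoot n ⟨n - 1, by omega⟩, dRoot n ⟨n - 3, by omega⟩, dRoot n ⟨n - 2, by omega⟩,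
        dRoot n ⟨n - 4, by omega⟩, dRoot n ⟨n - 5, by omega⟩, dRoot n ⟨n - 8, by omega⟩,
        dRoot n ⟨n - 7, by omega⟩})
    -- its orthogonal complement `N` in `D_n`
    (N : Set (Fin n → ℤ))
    (hN : N = {v | v ∈ Dlat n ∧ ∀ s ∈ S, bD n v s = 0})
    -- the root `a = d_n + d_{n−1} + 2(d_{n−2} + ⋯ + d₂) + d₁`
    (a : Fin n → ℤ)
    (ha : a = dRoot n ⟨n - 1, by omega⟩ + dRoot n ⟨n - 2, by omega⟩
        + (2 : ℤ) • (∑ i ∈ univ.filter (fun i : Fin n => 1 ≤ (i : ℕ) ∧ (i : ℕ) ≤ n - 3),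
            dRoot n i)
        + dRoot n ⟨0, by omega⟩)
    -- the root sublattice of `N`: the ℤ-span of the vectors `v ∈ N` with `b(v,v) = −2`
    (R : Submodule ℤ (Fin n → ℤ))
    (hR : R = Submodule.span ℤ {v | v ∈ N ∧ bD n v v = -2})
    -- the glue vector `[2]_{D_n} = Σ_{i=1}^{n−2} d_i + ½(d_{n−1} + d_n) ∈ ℚⁿ`
    (glue2 : Fin n → ℚ)
    (hglue2 : glue2 = (∑ i ∈ univ.filter (fun i : Fin n => (i : ℕ) ≤ n - 3),
          fun j => ((dRoot n i j : ℤ) : ℚ))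
        + (1 / 2 : ℚ) • ((fun j => ((dRoot n ⟨n - 2, by omega⟩ j : ℤ) : ℚ))
            + fun j => ((dRoot n ⟨n - 1, by omega⟩ j : ℤ) : ℚ))) :
    -- (i) generators of `N`
    N = (Submodule.span ℤ
        ({a, dRoot n ⟨n - 7, by omega⟩ + (2 : ℤ) • dRoot n ⟨n - 8, by omega⟩
            + (3 : ℤ) • dRoot n ⟨n - 9, by omega⟩}
          ∪ {x | ∃ i : Fin n, (i : ℕ) ≤ n - 10 ∧ x = dRoot n i}) : Set (Fin n → ℤ))
    -- (ii) the root sublattice of `N` has ℤ-basis `{a, d₁, …, d_{n−9}}` …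
    ∧ R = Submodule.span ℤ ({a} ∪ {x | ∃ i : Fin n, (i : ℕ) ≤ n - 10 ∧ x = dRoot n i})
    ∧ LinearIndependent ℤ (fun j : Fin (n - 8) =>
        if h : (j : ℕ) < n - 9 then dRoot n ⟨(j : ℕ), by omega⟩ else a)
    -- … and is the copy of `D_{n−8}` supported on the first `n−8` coordinates
    ∧ (R : Set (Fin n → ℤ))
        = {v | (∀ i : Fin n, n - 8 ≤ (i : ℕ) → v i = 0) ∧ Even (∑ i, v i)}
    -- negative definiteness of the root sublattice
    ∧ (∀ v ∈ R, v ≠ 0 → bD n v v < 0)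
    -- (iii) `2·[2]_{D_n} = a + d₁`
    ∧ (2 : ℚ) • glue2 = fun j => (((a + dRoot n ⟨0, by omega⟩) j : ℤ) : ℚ) := by
  subst hS hN hR hglue2
  rw [a_eq_unitVec_add_unitVec (by omega)] at ha
  subst ha
  have hspan :=
    span_unitVec_add_unitVec_union_dRootsUpTo (n := n) (m := n - 8) (by omega) (by omega)
  rw [show n - 8 - 2 = n - 10 by omega, Set.singleton_union, dRootsUpTo] at hspan
  rw [orthComplement_a2d5_eq (by omega)]
  refine ⟨?_, ?_, linearIndependent_dRoot_unitVec (by omega) (by omega) (by omega), ?_,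
    fun v _ hv => bD_self_neg hv, two_smul_glue_eq (by omega)⟩
  · rw [← wVec_eq (by omega), Set.insert_union, Set.singleton_union, Set.insert_comm]
    ext v
    rw [SetLike.mem_coe, Submodule.mem_span_insert', hspan]
    rfl
  · rw [span_roots_eq_dSublattice hn, Set.singleton_union]
    exact hspan.symm
  · rw [span_roots_eq_dSublattice hn]
    rfl
end

section
/- Let E₈ be the lattice ℤ⁸ with bilinear form b whose Gram matrix on the basis e₁, …, e₈ is the negative of the Cartan matrix of E₈ in Bourbaki numbering (so b(e_i, e_i) = −2 for all i, b(e_i, e_j) = 1 if {i, j} is one of the adjacent pairs {1,3}, {3,4}, {2,4}, {4,5}, {5,6}, {6,7}, {7,8}, and b(e_i, e_j) = 0 otherwise). Then the vector v = 6e₁ + 9e₂ + 12e₃ + 18e₄ + 15e₅ + 12e₆ + 8e₇ + 4e₈ satisfies b(v, v) = −12, and the orthogonal complement {w ∈ E₈ : b(w, v) = 0} is a rank‑7 lattice admitting a ℤ‑basis whose Gram matrix is the orthogonal direct sum of the negated Cartan matrices of A₂ and of D₅. -/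
/-! Since `G v = -e₆` for the Gram matrix `G`, the vector `v` is the fundamental weight `ω₆`
(for the negated form), so `b(w, v) = -w₆` and `b(v, v) = -v₆ = -12`. Hence the orthogonal
complement is spanned by the simple roots `eᵢ`, `i ≠ 6`, and deleting node 6 from the `E₈`
Dynkin diagram leaves `A₂` (nodes 7, 8) and `D₅` (nodes 1–5). -/

/-- The negated Cartan matrix of `E₈` in Bourbaki numbering: `−2` on the diagonal and `1`
for the adjacent pairs `{1,3}, {3,4}, {2,4}, {4,5}, {5,6}, {6,7}, {7,8}` (here 0-based). -/
def gramE8 : Matrix (Fin 8) (Fin 8) ℤ :=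
  !![-2,  0,  1,  0,  0,  0,  0,  0;
      0, -2,  0,  1,  0,  0,  0,  0;
      1,  0, -2,  1,  0,  0,  0,  0;
      0,  1,  1, -2,  1,  0,  0,  0;
      0,  0,  0,  1, -2,  1,  0,  0;
      0,  0,  0,  0,  1, -2,  1,  0;
      0,  0,  0,  0,  0,  1, -2,  1;
      0,  0,  0,  0,  0,  0,  1, -2]

/-- The bilinear form of the `E₈` lattice on `ℤ⁸` (coordinates in the basis `e₁, …, e₈`). -/
def bE8 (v w : Fin 8 → ℤ) : ℤ := ∑ i, ∑ j, v i * gramE8 i j * w j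

/-- The orthogonal direct sum of the negated Cartan matrices of `A₂` and `D₅`
(Bourbaki numbering for `D₅`). -/
def gramA2D5 : Matrix (Fin 7) (Fin 7) ℤ :=
  !![-2,  1,  0,  0,  0,  0,  0;
      1, -2,  0,  0,  0,  0,  0;
      0,  0, -2,  1,  0,  0,  0;
      0,  0,  1, -2,  1,  0,  0;
      0,  0,  0,  1, -2,  1,  1;
      0,  0,  0,  0,  1, -2,  0;
      0,  0,  0,  0,  1,  0, -2]

open Matrix Submodule

lemma Pi.mem_span_basisFun_image_compl_singleton {R ι : Type*} [Semiring R] [Finite ι] (a : ι)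
    (w : ι → R) : w ∈ span R (Pi.basisFun R ι '' {a}ᶜ) ↔ w a = 0 := by
  rw [Module.Basis.mem_span_image, Set.subset_compl_singleton_iff]
  simp [Pi.basisFun_repr]

lemma bE8_eq_dotProduct_mulVec (v w : Fin 8 → ℤ) : bE8 v w = v ⬝ᵥ (gramE8 *ᵥ w) := by
  simp only [bE8, dotProduct, mulVec, Finset.mul_sum, mul_assoc]

lemma bE8_basisFun (a b : Fin 8) :
    bE8 (Pi.basisFun ℤ (Fin 8) a) (Pi.basisFun ℤ (Fin 8) b) = gramE8 a b := by
  simp [bE8_eq_dotProduct_mulVec, Pi.basisFun_apply]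

lemma gramE8_mulVec_weight : gramE8 *ᵥ ![6, 9, 12, 18, 15, 12, 8, 4] = -Pi.single 5 1 := by
  decide

lemma bE8_weight (w : Fin 8 → ℤ) : bE8 w ![6, 9, 12, 18, 15, 12, 8, 4] = -w 5 := by
  simp [bE8_eq_dotProduct_mulVec, gramE8_mulVec_weight]

/-- The Bourbaki nodes `7, 8` and `1, 3, 4, 5, 2` of `E₈` (0-based here), matching the Bourbaki
numbering of `A₂` and of `D₅`. -/
def a2d5Nodes : Fin 7 → Fin 8 := ![6, 7, 0, 2, 3, 1, 4]

lemma a2d5Nodes_injective : Function.Injective a2d5Nodes := by decide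

lemma range_a2d5Nodes : Set.range a2d5Nodes = {5}ᶜ := by
  ext k
  fin_cases k <;> simp [a2d5Nodes]

lemma gramE8_submatrix_a2d5Nodes : gramE8.submatrix a2d5Nodes a2d5Nodes = gramA2D5 := by
  decide

/-- The vector `v = 6e₁ + 9e₂ + 12e₃ + 18e₄ + 15e₅ + 12e₆ + 8e₇ + 4e₈` satisfies
`b(v, v) = −12`, and its orthogonal complement in `E₈` is a rank-7 lattice with a ℤ-basis
whose Gram matrix is the orthogonal direct sum of the negated Cartan matrices of `A₂`
and `D₅` (i.e. the complement is a copy of `A₂ ⊕ D₅`). -/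
theorem stmt5 (v : Fin 8 → ℤ) (hv : v = ![6, 9, 12, 18, 15, 12, 8, 4]) :
    bE8 v v = -12 ∧
    ∃ f : Fin 7 → (Fin 8 → ℤ),
      LinearIndependent ℤ f ∧
      (Submodule.span ℤ (Set.range f) : Set (Fin 8 → ℤ)) = {w | bE8 w v = 0} ∧
      ∀ i j, bE8 (f i) (f j) = gramA2D5 i j := by
  subst hv
  refine ⟨by rw [bE8_weight]; rfl, Pi.basisFun ℤ (Fin 8) ∘ a2d5Nodes,
    (Pi.basisFun ℤ (Fin 8)).linearIndependent.comp _ a2d5Nodes_injective, ?_, ?_⟩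
  · ext w
    rw [SetLike.mem_coe, Set.range_comp, range_a2d5Nodes,
      Pi.mem_span_basisFun_image_compl_singleton, Set.mem_ofPred_eq, bE8_weight, neg_eq_zero]
  · intro i j
    rw [Function.comp_apply, Function.comp_apply, bE8_basisFun, ← gramE8_submatrix_a2d5Nodes,
      submatrix_apply]
end

section
/- Let a, b ∈ ℂ with b ≠ 0. Let w₁, w₂ ∈ ℂ satisfy w₁² + (a − 2b)w₁ + 1 = 0 and w₂² + (a + 2b)w₂ + 1 = 0, set l₁ = w₂/w₁ and l₂ = w₁w₂, and assume l₁ ≠ 1 and l₂ ≠ 1. Define j_i = 256(1 − l_i + l_i²)³ / (l_i²(1 − l_i)²) for i = 1, 2. Then j₁j₂ = 4096(a² − 3 + 12b²)³ / b² and (j₁ − 1728)(j₂ − 1728) = 1024 a² (2a² − 9 − 72b²)² / b². -/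
/-!
Adding and subtracting the two quadratic equations expresses `a` and `b` through the roots:
with `u = w₁w₂`, `2ua = -(w₁ + w₂)(u + 1)` and `4ub = (w₁ - w₂)(u - 1)`. In these coordinates
`a² - 3 + 12b²` and `2a² - 9 - 72b²` factor into the pieces of `j(w₂/w₁)` and `j(u)`:
the numerators `1 - l + l²` of `j`, and the factors `(l + 1)(l - 2)(2l - 1)` of `j - 1728`.
-/

theorem ne_zero_of_sq_add_mul_add_one_eq_zero {R : Type*} [Semiring R] [Nontrivial R] {c w : R}
    (h : w ^ 2 + c * w + 1 = 0) : w ≠ 0 := by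
  rintro rfl
  simp at h

section

variable {K : Type*} [Field K]

def legendreJ (l : K) : K := 256 * (1 - l + l ^ 2) ^ 3 / (l ^ 2 * (1 - l) ^ 2)

theorem legendreJ_sub_1728 {l : K} (h0 : l ≠ 0) (h1 : l ≠ 1) :
    legendreJ l - 1728 = 64 * ((l + 1) * (l - 2) * (2 * l - 1)) ^ 2 / (l ^ 2 * (1 - l) ^ 2) := by
  have : 1 - l ≠ 0 := sub_ne_zero.mpr h1.symm
  unfold legendreJ
  field_simp
  ring

variable [CharZero K] {a b w1 w2 : K} (hw1 : w1 ^ 2 + (a - 2 * b) * w1 + 1 = 0)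
  (hw2 : w2 ^ 2 + (a + 2 * b) * w2 + 1 = 0)
include hw1 hw2

theorem a_eq_of_roots : a = -((w1 + w2) * (w1 * w2 + 1)) / (2 * (w1 * w2)) := by
  have := ne_zero_of_sq_add_mul_add_one_eq_zero hw1
  have := ne_zero_of_sq_add_mul_add_one_eq_zero hw2
  field_simp
  linear_combination w2 * hw1 + w1 * hw2

theorem b_eq_of_roots : b = (w1 - w2) * (w1 * w2 - 1) / (4 * (w1 * w2)) := by
  have := ne_zero_of_sq_add_mul_add_one_eq_zero hw1
  have := ne_zero_of_sq_add_mul_add_one_eq_zero hw2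
  field_simp
  linear_combination -w2 * hw1 + w1 * hw2

theorem legendreJ_div_mul_legendreJ_mul (h12 : w1 ≠ w2) (hu : w1 * w2 ≠ 1) :
    legendreJ (w2 / w1) * legendreJ (w1 * w2) = 4096 * (a ^ 2 - 3 + 12 * b ^ 2) ^ 3 / b ^ 2 := by
  have h1 := ne_zero_of_sq_add_mul_add_one_eq_zero hw1
  have h2 := ne_zero_of_sq_add_mul_add_one_eq_zero hw2
  have : w1 - w2 ≠ 0 := sub_ne_zero.mpr h12
  have : 1 - w1 * w2 ≠ 0 := sub_ne_zero.mpr hu.symm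
  have : w1 * w2 - 1 ≠ 0 := sub_ne_zero.mpr hu
  have hP : a ^ 2 - 3 + 12 * b ^ 2
      = (w1 ^ 2 - w1 * w2 + w2 ^ 2) * (1 - w1 * w2 + (w1 * w2) ^ 2) / (w1 * w2) ^ 2 := by
    rw [a_eq_of_roots hw1 hw2, b_eq_of_roots hw1 hw2]
    field_simp
    ring
  rw [hP, b_eq_of_roots hw1 hw2]
  unfold legendreJ
  field_simp
  ring

theorem legendreJ_div_sub_1728_mul_legendreJ_mul_sub_1728 (h12 : w1 ≠ w2) (hu : w1 * w2 ≠ 1) :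
    (legendreJ (w2 / w1) - 1728) * (legendreJ (w1 * w2) - 1728)
      = 1024 * a ^ 2 * (2 * a ^ 2 - 9 - 72 * b ^ 2) ^ 2 / b ^ 2 := by
  have h1 := ne_zero_of_sq_add_mul_add_one_eq_zero hw1
  have h2 := ne_zero_of_sq_add_mul_add_one_eq_zero hw2
  have : w1 - w2 ≠ 0 := sub_ne_zero.mpr h12
  have : 1 - w1 * w2 ≠ 0 := sub_ne_zero.mpr hu.symm
  have : w1 * w2 - 1 ≠ 0 := sub_ne_zero.mpr hu
  have hQ : 2 * a ^ 2 - 9 - 72 * b ^ 2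
      = (2 * w1 - w2) * (2 * w2 - w1) * (w1 * w2 - 2) * (2 * (w1 * w2) - 1) / (w1 * w2) ^ 2 := by
    rw [a_eq_of_roots hw1 hw2, b_eq_of_roots hw1 hw2]
    field_simp
    ring
  have hl1 : w2 / w1 ≠ 1 := by rwa [ne_eq, div_eq_one_iff_eq h1, eq_comm]
  rw [legendreJ_sub_1728 (div_ne_zero h2 h1) hl1, legendreJ_sub_1728 (mul_ne_zero h1 h2) hu, hQ,
    a_eq_of_roots hw1 hw2, b_eq_of_roots hw1 hw2]
  field_simp
  ring

end

theorem stmt6_general (a b w1 w2 l1 l2 j1 j2 : ℂ)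
    (hw1 : w1 ^ 2 + (a - 2 * b) * w1 + 1 = 0)
    (hw2 : w2 ^ 2 + (a + 2 * b) * w2 + 1 = 0)
    (hl1 : l1 = w2 / w1) (hl2 : l2 = w1 * w2)
    (hl1' : l1 ≠ 1) (hl2' : l2 ≠ 1)
    (hj1 : j1 = 256 * (1 - l1 + l1 ^ 2) ^ 3 / (l1 ^ 2 * (1 - l1) ^ 2))
    (hj2 : j2 = 256 * (1 - l2 + l2 ^ 2) ^ 3 / (l2 ^ 2 * (1 - l2) ^ 2)) :
    j1 * j2 = 4096 * (a ^ 2 - 3 + 12 * b ^ 2) ^ 3 / b ^ 2 ∧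
    (j1 - 1728) * (j2 - 1728)
      = 1024 * a ^ 2 * (2 * a ^ 2 - 9 - 72 * b ^ 2) ^ 2 / b ^ 2 := by
  subst hj1 hj2 hl1 hl2
  have hne : w1 ≠ w2 := by
    rintro rfl
    exact hl1' (div_self (ne_zero_of_sq_add_mul_add_one_eq_zero hw1))
  exact ⟨legendreJ_div_mul_legendreJ_mul hw1 hw2 hne hl2',
    legendreJ_div_sub_1728_mul_legendreJ_mul_sub_1728 hw1 hw2 hne hl2'⟩

/-- Proposition 4.1 of the paper: relations between the `j`-invariants of the two
elliptic curves `E_i : y² = x(x−1)(x−l_i)` attached to the quotient of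
`S_{a,b} : Y² = X³ + (t + 1/t + a)X² + b²X` by the translation by `(0,0)`. -/
theorem stmt6 (a b w1 w2 l1 l2 j1 j2 : ℂ) (hb : b ≠ 0)
    (hw1 : w1 ^ 2 + (a - 2 * b) * w1 + 1 = 0)
    (hw2 : w2 ^ 2 + (a + 2 * b) * w2 + 1 = 0)
    (hl1 : l1 = w2 / w1) (hl2 : l2 = w1 * w2)
    (hl1' : l1 ≠ 1) (hl2' : l2 ≠ 1)
    (hj1 : j1 = 256 * (1 - l1 + l1 ^ 2) ^ 3 / (l1 ^ 2 * (1 - l1) ^ 2))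
    (hj2 : j2 = 256 * (1 - l2 + l2 ^ 2) ^ 3 / (l2 ^ 2 * (1 - l2) ^ 2)) :
    j1 * j2 = 4096 * (a ^ 2 - 3 + 12 * b ^ 2) ^ 3 / b ^ 2 ∧
    (j1 - 1728) * (j2 - 1728)
      = 1024 * a ^ 2 * (2 * a ^ 2 - 9 - 72 * b ^ 2) ^ 2 / b ^ 2 :=
  stmt6_general a b w1 w2 l1 l2 j1 j2 hw1 hw2 hl1 hl2 hl1' hl2' hj1 hj2
end

section
/- Let s ∈ ℂ with s ≠ 0, and set a = (s⁴ + 14s² + 1)/(4s) and b = s². Then 4096(a² − 3 + 12b²)³ / b² = (s² + 1)³ (s⁶ + 219s⁴ − 21s² + 1)³ / s¹⁰ and 1024 a² (2a² − 9 − 72b²)² / b² = (s⁴ + 14s² + 1)² (s⁸ − 548s⁶ + 198s⁴ − 44s² + 1)² / s¹⁰. Consequently the j‑invariants j₁, j₂ of Proposition 4.1 attached to this (a, b) satisfy j₁j₂ = (s²+1)³(s⁶+219s⁴−21s²+1)³/s¹⁰ and (j₁ − 1728)(j₂ − 1728) = (s⁴+14s²+1)²(s⁸−548s⁶+198s⁴−44s²+1)²/s¹⁰.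 -/
/-- Corollary 4.1 of the paper: for `a = (s⁴ + 14s² + 1)/(4s)` and `b = s²`, the two
expressions of Proposition 4.1 take the stated values; consequently the `j`-invariants
`j₁, j₂` attached to this `(a, b)` satisfy
`j₁j₂ = (s²+1)³(s⁶+219s⁴−21s²+1)³/s¹⁰` and
`(j₁−1728)(j₂−1728) = (s⁴+14s²+1)²(s⁸−548s⁶+198s⁴−44s²+1)²/s¹⁰`. -/
theorem stmt7 (s a b : ℂ) (hs : s ≠ 0)
    (ha : a = (s ^ 4 + 14 * s ^ 2 + 1) / (4 * s)) (hb : b = s ^ 2) :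
    4096 * (a ^ 2 - 3 + 12 * b ^ 2) ^ 3 / b ^ 2
      = (s ^ 2 + 1) ^ 3 * (s ^ 6 + 219 * s ^ 4 - 21 * s ^ 2 + 1) ^ 3 / s ^ 10
    ∧ 1024 * a ^ 2 * (2 * a ^ 2 - 9 - 72 * b ^ 2) ^ 2 / b ^ 2
      = (s ^ 4 + 14 * s ^ 2 + 1) ^ 2
          * (s ^ 8 - 548 * s ^ 6 + 198 * s ^ 4 - 44 * s ^ 2 + 1) ^ 2 / s ^ 10
    ∧ ∀ j1 j2 : ℂ,
        j1 * j2 = 4096 * (a ^ 2 - 3 + 12 * b ^ 2) ^ 3 / b ^ 2 →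
        (j1 - 1728) * (j2 - 1728)
            = 1024 * a ^ 2 * (2 * a ^ 2 - 9 - 72 * b ^ 2) ^ 2 / b ^ 2 →
        j1 * j2 = (s ^ 2 + 1) ^ 3 * (s ^ 6 + 219 * s ^ 4 - 21 * s ^ 2 + 1) ^ 3 / s ^ 10
          ∧ (j1 - 1728) * (j2 - 1728)
              = (s ^ 4 + 14 * s ^ 2 + 1) ^ 2
                  * (s ^ 8 - 548 * s ^ 6 + 198 * s ^ 4 - 44 * s ^ 2 + 1) ^ 2 / s ^ 10 := by
  subst ha hb
  have h1 : 4096 * (((s ^ 4 + 14 * s ^ 2 + 1) / (4 * s)) ^ 2 - 3 + 12 * (s ^ 2) ^ 2) ^ 3 / (s ^ 2) ^ 2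
      = (s ^ 2 + 1) ^ 3 * (s ^ 6 + 219 * s ^ 4 - 21 * s ^ 2 + 1) ^ 3 / s ^ 10 := by
    field_simp
    ring
  have h2 : 1024 * ((s ^ 4 + 14 * s ^ 2 + 1) / (4 * s)) ^ 2 *
      (2 * ((s ^ 4 + 14 * s ^ 2 + 1) / (4 * s)) ^ 2 - 9 - 72 * (s ^ 2) ^ 2) ^ 2 / (s ^ 2) ^ 2
      = (s ^ 4 + 14 * s ^ 2 + 1) ^ 2 * (s ^ 8 - 548 * s ^ 6 + 198 * s ^ 4 - 44 * s ^ 2 + 1) ^ 2 / s ^ 10 := by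
    field_simp
    ring
  exact ⟨h1, h2, fun j1 j2 e1 e2 => ⟨e1.trans h1, e2.trans h2⟩⟩
end

section
/- Let K be a field, let A, B, U, Y ∈ K with U ≠ 0, and suppose Y² = U⁶ + AU⁴ + BU². Define x = 2(Y + U³)/U and y = 4Y + 4U³ + 2UA. Then y² = (x + A)(x² − 4B). -/
/-- The birational transformation of Section 4.5.1 of the paper: it carries the curve
`Y² = U⁶ + AU⁴ + BU²` to the Weierstrass form `y² = (x + A)(x² − 4B)`. -/
theorem stmt8 {K : Type*} [Field K] (A B U Y x y : K) (hU : U ≠ 0)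
    (h : Y ^ 2 = U ^ 6 + A * U ^ 4 + B * U ^ 2)
    (hx : x = 2 * (Y + U ^ 3) / U)
    (hy : y = 4 * Y + 4 * U ^ 3 + 2 * U * A) :
    y ^ 2 = (x + A) * (x ^ 2 - 4 * B) := by
  have hxU : x * U = 2 * (Y + U ^ 3) := by
    rw [hx, div_mul_cancel₀ _ hU]
  have hy' : y = 2 * U * (x + A) := by
    linear_combination hy - 2 * hxU
  have hx2 : x ^ 2 - 4 * B = 4 * U ^ 2 * (x + A) := by
    refine mul_right_cancel₀ (pow_ne_zero 2 hU) ?_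
    linear_combination (x * U + 2 * Y - 2 * U ^ 3) * hxU + 4 * h
  rw [hy', hx2]
  ring
end

section
/- Let K be a field, let X, Y, Z ∈ K be nonzero, and set k = X + 1/X + Y + 1/Y + Z + 1/Z. Define u = XY/Z, x = −u(1 + uZ)(u + Y), and y = u²((u + Y)(uY − 1)Z + Y(Y + 2u + k) − 1). Then y² + uk·yx + u²(u² + uk + 1)·y = x³. -/
/-- Section 3.1 of the paper: on the Apéry–Fermi surface `X + 1/X + Y + 1/Y + Z + 1/Z = k`,
with elliptic parameter `u = XY/Z`, the birational transformation
`x = −u(1 + uZ)(u + Y)`, `y = u²((u + Y)(uY − 1)Z + Y(Y + 2u + k) − 1)`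
yields the Weierstrass equation `y² + uk·yx + u²(u² + uk + 1)·y = x³` of fibration #19. -/
theorem stmt9 {K : Type*} [Field K] (X Y Z : K)
    (hX : X ≠ 0) (hY : Y ≠ 0) (hZ : Z ≠ 0)
    (k u x y : K)
    (hk : k = X + 1 / X + Y + 1 / Y + Z + 1 / Z)
    (hu : u = X * Y / Z)
    (hx : x = -u * (1 + u * Z) * (u + Y))
    (hy : y = u ^ 2 * ((u + Y) * (u * Y - 1) * Z + Y * (Y + 2 * u + k) - 1)) :
    y ^ 2 + u * k * y * x + u ^ 2 * (u ^ 2 + u * k + 1) * y = x ^ 3 := by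
  obtain ⟨a, ha⟩ : ∃ a, X * a = 1 := ⟨X⁻¹, mul_inv_cancel₀ hX⟩
  obtain ⟨b, hb⟩ : ∃ b, Y * b = 1 := ⟨Y⁻¹, mul_inv_cancel₀ hY⟩
  obtain ⟨c, hc⟩ : ∃ cc, Z * cc = 1 := ⟨Z⁻¹, mul_inv_cancel₀ hZ⟩
  have hXa : (1:K) / X = a := ((eq_div_iff hX).mpr (by rw [mul_comm]; exact ha)).symm
  have hYb : (1:K) / Y = b := ((eq_div_iff hY).mpr (by rw [mul_comm]; exact hb)).symm
  have hZc : (1:K) / Z = c := ((eq_div_iff hZ).mpr (by rw [mul_comm]; exact hc)).symm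
  have hu' : u = X * Y * c := by rw [hu, div_eq_mul_inv, eq_comm, ← hZc, one_div]
  rw [hXa, hYb, hZc] at hk
  subst hk hu' hx hy
  linear_combination ((-1)*X ^ 3*Y ^ 6*Z*c ^ 4 + X ^ 3*Y ^ 7*c ^ 4 + (-1)*X ^ 3*Y ^ 7*Z*c ^ 5 + 2*X ^ 4*Y ^ 7*c ^ 5 + (-3)*X ^ 4*Y ^ 7*Z*c ^ 6 + (-2)*X ^ 4*Y ^ 7*Z*b*c ^ 5 + (-1)*X ^ 4*Y ^ 7*Z*a*c ^ 5 + (-1)*X ^ 4*Y ^ 7*Z ^ 2*c ^ 5 + (-2)*X ^ 4*Y ^ 8*Z*c ^ 5 + X ^ 5*Y ^ 6*Z*c ^ 6 + X ^ 5*Y ^ 7*c ^ 6 + (-2)*X ^ 5*Y ^ 7*Z*c ^ 5 + (-2)*X ^ 5*Y ^ 7*Z*c ^ 7 + (-2)*X ^ 5*Y ^ 7*Z*b*c ^ 6 + (-1)*X ^ 5*Y ^ 7*Z*a*c ^ 6 + (-4)*X ^ 5*Y ^ 8*Z*c ^ 6 + (-1)*X ^ 5*Y ^ 9*Z ^ 2*c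 ^ 6 + (-2)*X ^ 6*Y ^ 7*Z*c ^ 6 + X ^ 6*Y ^ 7*Z ^ 2*c ^ 7 + (-2)*X ^ 6*Y ^ 8*Z*c ^ 7 + (-2)*X ^ 6*Y ^ 9*Z ^ 2*c ^ 7 + (-1)*X ^ 7*Y ^ 9*Z ^ 2*c ^ 8) * ha + ((-1)*X ^ 4*Y ^ 5*Z*c ^ 4 + X ^ 4*Y ^ 6*c ^ 4 + (-2)*X ^ 4*Y ^ 6*Z*c ^ 5 + (-1)*X ^ 5*Y ^ 5*Z*c ^ 5 + 2*X ^ 5*Y ^ 6*c ^ 5 + (-4)*X ^ 5*Y ^ 6*Z*c ^ 6 + (-1)*X ^ 5*Y ^ 6*Z*b*c ^ 5 + (-1)*X ^ 5*Y ^ 6*Z ^ 2*c ^ 5 + (-2)*X ^ 5*Y ^ 7*Z*c ^ 5 + X ^ 6*Y ^ 6*c ^ 6 + (-2)*X ^ 6*Y ^ 6*Z*c ^ 5 + (-2)*X ^ 6*Y ^ 6*Z*c ^ 7 + (-1)*X ^ 6*Y ^ 6*Z*b*c ^ 6 + (-4)*X ^ 6*Y ^ 7*Z*c ^ 6 + (-1)*X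 ^ 6*Y ^ 8*Z ^ 2*c ^ 6 + (-2)*X ^ 7*Y ^ 6*Z*c ^ 6 + X ^ 7*Y ^ 6*Z ^ 2*c ^ 7 + (-2)*X ^ 7*Y ^ 7*Z*c ^ 7 + (-2)*X ^ 7*Y ^ 8*Z ^ 2*c ^ 7 + (-1)*X ^ 8*Y ^ 8*Z ^ 2*c ^ 8) * hb + ((-1)*X ^ 3*Y ^ 6*c ^ 3 + (-1)*X ^ 3*Y ^ 7*c ^ 4 + (-3)*X ^ 4*Y ^ 6*c ^ 4 + (-3)*X ^ 4*Y ^ 7*c ^ 5 + (-1)*X ^ 4*Y ^ 7*Z*c ^ 4 + (-2)*X ^ 4*Y ^ 8*c ^ 4 + (-3)*X ^ 5*Y ^ 6*c ^ 5 + X ^ 5*Y ^ 6*Z*c ^ 4 + (-1)*X ^ 5*Y ^ 7*c ^ 4 + (-3)*X ^ 5*Y ^ 7*c ^ 6 + (-1)*X ^ 5*Y ^ 7*Z*c ^ 5 + (-6)*X ^ 5*Y ^ 8*c ^ 5 + (-1)*X ^ 5*Y ^ 9*Z*c ^ 5 + (-1)*X ^ 6*Y ^ 6*c ^ 6 + 2*X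 ^ 6*Y ^ 6*Z*c ^ 5 + (-2)*X ^ 6*Y ^ 7*c ^ 5 + (-1)*X ^ 6*Y ^ 7*c ^ 7 + X ^ 6*Y ^ 7*Z*c ^ 6 + X ^ 6*Y ^ 7*Z ^ 2*c ^ 5 + (-6)*X ^ 6*Y ^ 8*c ^ 6 + 2*X ^ 6*Y ^ 8*Z*c ^ 5 + (-3)*X ^ 6*Y ^ 9*Z*c ^ 6 + X ^ 7*Y ^ 6*Z*c ^ 6 + (-1)*X ^ 7*Y ^ 7*c ^ 6 + X ^ 7*Y ^ 7*Z*c ^ 5 + X ^ 7*Y ^ 7*Z*c ^ 7 + X ^ 7*Y ^ 7*Z ^ 2*c ^ 6 + (-2)*X ^ 7*Y ^ 8*c ^ 7 + 4*X ^ 7*Y ^ 8*Z*c ^ 6 + (-3)*X ^ 7*Y ^ 9*Z*c ^ 7 + X ^ 7*Y ^ 9*Z ^ 2*c ^ 6 + X ^ 8*Y ^ 7*Z*c ^ 6 + 2*X ^ 8*Y ^ 8*Z*c ^ 7 + (-1)*X ^ 8*Y ^ 9*Z*c ^ 8 + 2*X ^ 8*Y ^ 9*Z ^ 2*c ^ 7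 + X ^ 9*Y ^ 9*Z ^ 2*c ^ 8) * hc
end

section
/- In the rational function field ℚ(s, g), set x = s²(g−1)²(g+s²)(s²g+1)/(s²−1)² and y = (1/2)·s²(g²−1)(g+s²)(s²g+1)(2g²s² + g(s⁴−6s²+1) + 2s²)/(s²−1)³. Then y² = x³ + (1/4)g²(s⁴ + 14s² + 1)x² + s²g³(g + s²)(gs² + 1)x. -/
/-! The only denominators are powers of `2` and of `s² - 1`, and `s² - 1 ≠ 0` in `ℚ(s, g)` because
`X₀² - 1` is a nonzero polynomial; once they are cleared the Weierstrass equation is a polynomial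
identity in `s` and `g`, valid over any field of characteristic `≠ 2`. -/

/-- The rational function field `ℚ(s, g)`. -/
noncomputable abbrev QsgField : Type := FractionRing (MvPolynomial (Fin 2) ℚ)

/-- The transcendental element `s` of `ℚ(s, g)`. -/
noncomputable def sElt : QsgField :=
  algebraMap (MvPolynomial (Fin 2) ℚ) QsgField (MvPolynomial.X 0)

/-- The transcendental element `g` of `ℚ(s, g)`. -/
noncomputable def gElt : QsgField :=
  algebraMap (MvPolynomial (Fin 2) ℚ) QsgField (MvPolynomial.X 1)

section Fibration9

variable {K : Type*} [Field K]

/-- The Weierstrass model of fibration #9 of the Apéry–Fermi K3 surface `Y_k`, `k = s + 1/s`. -/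
def fibration9 (s g : K) : WeierstrassCurve.Affine K :=
  { a₁ := 0, a₂ := (1 / 4) * g ^ 2 * (s ^ 4 + 14 * s ^ 2 + 1), a₃ := 0,
    a₄ := s ^ 2 * g ^ 3 * (g + s ^ 2) * (g * s ^ 2 + 1), a₆ := 0 }

def fibration9PointX (s g : K) : K :=
  s ^ 2 * (g - 1) ^ 2 * (g + s ^ 2) * (s ^ 2 * g + 1) / (s ^ 2 - 1) ^ 2

def fibration9PointY (s g : K) : K :=
  (1 / 2) * (s ^ 2 * (g ^ 2 - 1) * (g + s ^ 2) * (s ^ 2 * g + 1)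
    * (2 * g ^ 2 * s ^ 2 + g * (s ^ 4 - 6 * s ^ 2 + 1) + 2 * s ^ 2)) / (s ^ 2 - 1) ^ 3

theorem fibration9_equation_point (h2 : (2 : K) ≠ 0) {s : K} (hs : s ^ 2 - 1 ≠ 0) (g : K) :
    (fibration9 s g).Equation (fibration9PointX s g) (fibration9PointY s g) := by
  have h4 : (4 : K) ≠ 0 := by
    simpa only [show (4 : K) = 2 * 2 by norm_num] using mul_ne_zero h2 h2
  rw [WeierstrassCurve.Affine.equation_iff]
  simp only [fibration9, fibration9PointX, fibration9PointY]
  field_simp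
  ring

end Fibration9

theorem sElt_sq_sub_one_ne_zero : sElt ^ 2 - 1 ≠ 0 := by
  have hX : (MvPolynomial.X 0 : MvPolynomial (Fin 2) ℚ) ^ 2 - 1 ≠ 0 := fun h => by
    have h2 := congrArg (MvPolynomial.eval fun _ => (2 : ℚ)) h
    norm_num at h2
  simpa [sElt] using (map_ne_zero_iff _ (IsFractionRing.injective _ QsgField)).mpr hX

/-- Section 3.3 of the paper: the stated point is a rational point of fibration #9
`y² = x³ + ¼g²(s⁴ + 14s² + 1)x² + s²g³(g + s²)(gs² + 1)x` over `ℚ(s, g)`. -/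
theorem stmt10 (x y : QsgField)
    (hx : x = sElt ^ 2 * (gElt - 1) ^ 2 * (gElt + sElt ^ 2) * (sElt ^ 2 * gElt + 1)
        / (sElt ^ 2 - 1) ^ 2)
    (hy : y = (1 / 2) * (sElt ^ 2 * (gElt ^ 2 - 1) * (gElt + sElt ^ 2) * (sElt ^ 2 * gElt + 1)
          * (2 * gElt ^ 2 * sElt ^ 2 + gElt * (sElt ^ 4 - 6 * sElt ^ 2 + 1) + 2 * sElt ^ 2))
        / (sElt ^ 2 - 1) ^ 3) :
    y ^ 2 = x ^ 3 + (1 / 4) * gElt ^ 2 * (sElt ^ 4 + 14 * sElt ^ 2 + 1) * x ^ 2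
      + sElt ^ 2 * gElt ^ 3 * (gElt + sElt ^ 2) * (gElt * sElt ^ 2 + 1) * x := by
  have h := fibration9_equation_point two_ne_zero sElt_sq_sub_one_ne_zero gElt
  rw [WeierstrassCurve.Affine.equation_iff] at h
  subst hx hy
  simpa [fibration9, fibration9PointX, fibration9PointY] using h
end
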